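/- arXiv:2512.06445 — 3 statements merged into one kernel-verified Lean document; each statement's English description precedes it below -/
import Mathlib

section
/- In the setting of the constrained Palais–Smale analysis (G noncompact connected metric graph with finitely many edges, p > 4, μ > 0, ρ ∈ [1/2,1], {u_n} ⊂ H¹_μ(G) a bounded Palais–Smale sequence for E_ρ(·,G) at level c > 0 with multipliers λ_n → λ_ρ and weak limit u_ρ which solves the limit equation), assume λ_ρ ≥ 0. Then ∫_G |(u_n − u_ρ)'|² dx + λ_ρ ∫_G |u_n − u_ρ|² dx → 0 as n → ∞. In particular, if λ_ρ > 0, then u_n → u_ρ strongly in H¹(G). -/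
open MeasureTheory Filter Topology Set
open scoped ENNReal

/-- A metric graph with finitely many vertices and edges.  Each edge `e` has a length
`length e ∈ (0,∞]`; `length e = ⊤` means that `e` is a half-line `[0,∞)`. The
endpoint of `e` identified with `0` is `src e`; for a bounded edge the endpoint
identified with `ℓ_e` is `dst e`; a half-line has no second endpoint (`dst e = none`). -/
structure MetricGraph where
  V : Type
  E : Type
  fintV : Fintype V
  fintE : Fintype E
  decV : DecidableEq V
  length : E → ℝ≥0∞
  length_pos : ∀ e, 0 < length e
  src : E → V
  dst : E → Option V
  dst_none_iff : ∀ e, dst e = none ↔ length e = ⊤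

attribute [instance] MetricGraph.fintV MetricGraph.fintE MetricGraph.decV

namespace MetricGraph

variable (G : MetricGraph)

/-- The interval `I_e` that edge `e` is identified with. -/
def interval (e : G.E) : Set ℝ :=
  if G.length e = ⊤ then Set.Ici 0 else Set.Icc 0 (G.length e).toReal

/-- Two vertices are adjacent if some bounded edge joins them. -/
def Adj (v w : G.V) : Prop :=
  ∃ e, (G.src e = v ∧ G.dst e = some w) ∨ (G.src e = w ∧ G.dst e = some v)

/-- The graph is connected. -/
def Connected : Prop := ∀ v w : G.V, Relation.ReflTransGen G.Adj v w

/-- The graph is noncompact, i.e. it has at least one half-line. -/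
def Noncompact : Prop := ∃ e, G.length e = ⊤

/-- The graph is compact, i.e. all edges are bounded. -/
def IsCompactGraph : Prop := ∀ e, G.length e ≠ ⊤

/-- Raw data of a function on the graph: the family of edge functions, the family of their
derivatives, and the family of vertex values. -/
abbrev Fun : Type := (G.E → ℝ → ℝ) × (G.E → ℝ → ℝ) × (G.V → ℝ)

/-- The edge functions `u_e`. -/
def eFun (u : G.Fun) : G.E → ℝ → ℝ := u.1

/-- The edge derivatives `u_e'`. -/
def eDeriv (u : G.Fun) : G.E → ℝ → ℝ := u.2.1

/-- The vertex values `u(v)`. -/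
def vVal (u : G.Fun) : G.V → ℝ := u.2.2

/-- `u ∈ H¹(G)`: every edge function is continuous on `I_e` with derivative `eDeriv u e`
in the interior, both the function and its derivative are in `L²(I_e)`, and the edge
functions take the common value `vVal u v` at each vertex `v` (continuity at vertices). -/
def IsH1 (u : G.Fun) : Prop :=
  (∀ e, ContinuousOn (G.eFun u e) (G.interval e)) ∧
  (∀ e, ∀ x ∈ interior (G.interval e), HasDerivAt (G.eFun u e) (G.eDeriv u e x) x) ∧
  (∀ e, MemLp (G.eFun u e) 2 (volume.restrict (G.interval e))) ∧
  (∀ e, MemLp (G.eDeriv u e) 2 (volume.restrict (G.interval e))) ∧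
  (∀ e, G.eFun u e 0 = G.vVal u (G.src e)) ∧
  (∀ e v, G.dst e = some v → G.eFun u e (G.length e).toReal = G.vVal u v)

/-- `‖u‖₂²`. -/
noncomputable def l2sq (u : G.Fun) : ℝ := ∑ e, ∫ x in G.interval e, (G.eFun u e x) ^ 2

/-- `‖u'‖₂²`. -/
noncomputable def dsq (u : G.Fun) : ℝ := ∑ e, ∫ x in G.interval e, (G.eDeriv u e x) ^ 2

/-- `‖u‖²_{H¹(G)}`. -/
noncomputable def h1sq (u : G.Fun) : ℝ := G.dsq u + G.l2sq u

/-- `‖u‖_{H¹(G)}`. -/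
noncomputable def h1norm (u : G.Fun) : ℝ := Real.sqrt (G.h1sq u)

/-- The `L²(G)` inner product. -/
noncomputable def l2inner (u w : G.Fun) : ℝ :=
  ∑ e, ∫ x in G.interval e, G.eFun u e x * G.eFun w e x

/-- `∫_G u'w' dx`. -/
noncomputable def dinner (u w : G.Fun) : ℝ :=
  ∑ e, ∫ x in G.interval e, G.eDeriv u e x * G.eDeriv w e x

/-- The `H¹(G)` inner product. -/
noncomputable def h1inner (u w : G.Fun) : ℝ := G.dinner u w + G.l2inner u w

/-- `Σ_{v∈V} |u(v)|^{p-2} u(v) η(v)`. -/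
noncomputable def vertexTerm (p : ℝ) (u η : G.Fun) : ℝ :=
  ∑ v, |G.vVal u v| ^ (p - 2) * G.vVal u v * G.vVal η v

/-- `Σ_{v∈V} |u(v)|^p`. -/
noncomputable def vertexLp (p : ℝ) (u : G.Fun) : ℝ := ∑ v, |G.vVal u v| ^ p

/-- The energy functional `E_ρ(u, G) = ½‖u'‖₂² − (ρ/p) Σ_{v∈V} |u(v)|^p`. -/
noncomputable def energy (p ρ : ℝ) (u : G.Fun) : ℝ :=
  (1 / 2) * G.dsq u - (ρ / p) * G.vertexLp p u

/-- `E_ρ'(u, G)[η] = ∫_G u'η' dx − ρ Σ_{v∈V} |u(v)|^{p−2} u(v) η(v)`. -/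
noncomputable def energyDeriv (p ρ : ℝ) (u η : G.Fun) : ℝ :=
  G.dinner u η - ρ * G.vertexTerm p u η

/-- `E_ρ''(u, G)[w,w] = ∫_G |w'|² dx − (p−1) ρ Σ_{v∈V} |u(v)|^{p−2} w(v)²`. -/
noncomputable def energyDeriv2 (p ρ : ℝ) (u w : G.Fun) : ℝ :=
  G.dsq w - (p - 1) * ρ * ∑ v, |G.vVal u v| ^ (p - 2) * (G.vVal w v) ^ 2

/-- `(u, λ)` is a weak solution of `u'' = λ u` on every edge with the nonlinear vertex
conditions `Σ_{e ≻ v} u_e'(v) = −ρ |u(v)|^{p−2} u(v)` at every vertex, i.e.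
`∫_G u'η' dx + λ ∫_G uη dx = ρ Σ_{v∈V} |u(v)|^{p−2} u(v) η(v)` for all `η ∈ H¹(G)`. -/
def IsWeakSolution (p ρ lam : ℝ) (u : G.Fun) : Prop :=
  ∀ η : G.Fun, G.IsH1 η →
    G.dinner u η + lam * G.l2inner u η = ρ * G.vertexTerm p u η

end MetricGraph

/-! Test both the Palais–Smale condition at `u_n` and the limit equation with
`w_n = u_n - u_ρ` and subtract: with `φ(s) = |s|^(p-2) s`,
`‖w_n'‖² + λ_ρ‖w_n‖² = (E_ρ'(u_n) + λ_n u_n)[w_n] + (λ_ρ - λ_n)(u_n, w_n)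
  + ρ Σ_v (φ(u_n(v)) - φ(u_ρ(v))) w_n(v)`.
The first term tends to `0` because `w_n` is bounded in `H¹`, the second because `λ_n → λ_ρ`,
and the third because the vertex set is finite and every vertex is an endpoint of some edge,
so pointwise convergence on the edges gives convergence of the vertex values. -/

section SquareIntegrable

variable {ι α : Type*} [Fintype ι] [MeasurableSpace α] {ν : ι → Measure α} {f g : ι → α → ℝ}

theorem sum_integral_sub_sq (hf : ∀ i, MemLp (f i) 2 (ν i)) (hg : ∀ i, MemLp (g i) 2 (ν i)) :
    ∑ i, ∫ x, (f i x - g i x) ^ 2 ∂ν i =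
      ∑ i, ∫ x, f i x * (f i x - g i x) ∂ν i - ∑ i, ∫ x, g i x * (f i x - g i x) ∂ν i := by
  rw [← Finset.sum_sub_distrib]
  refine Finset.sum_congr rfl fun i _ => ?_
  have hfg := (hf i).sub (hg i)
  have hf' : Integrable (fun x => f i x * (f i x - g i x)) (ν i) := (hf i).integrable_mul hfg
  have hg' : Integrable (fun x => g i x * (f i x - g i x)) (ν i) := (hg i).integrable_mul hfg
  exact (integral_congr_ae (ae_of_all _ fun x => by ring)).trans (integral_sub hf' hg')

theorem sum_integral_sub_sq_le (hf : ∀ i, MemLp (f i) 2 (ν i)) (hg : ∀ i, MemLp (g i) 2 (ν i)) :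
    ∑ i, ∫ x, (f i x - g i x) ^ 2 ∂ν i ≤
      2 * (∑ i, ∫ x, f i x ^ 2 ∂ν i + ∑ i, ∫ x, g i x ^ 2 ∂ν i) := by
  rw [← Finset.sum_add_distrib, Finset.mul_sum]
  refine Finset.sum_le_sum fun i _ => ?_
  rw [← integral_add (hf i).integrable_sq (hg i).integrable_sq, ← integral_const_mul]
  refine integral_mono ((hf i).sub (hg i)).integrable_sq
    (((hf i).integrable_sq.add (hg i).integrable_sq).const_mul 2) fun x => ?_
  nlinarith [sq_nonneg (f i x + g i x)]

theorem abs_sum_integral_mul_le (hf : ∀ i, MemLp (f i) 2 (ν i)) (hg : ∀ i, MemLp (g i) 2 (ν i)) :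
    |∑ i, ∫ x, f i x * g i x ∂ν i| ≤
      (∑ i, ∫ x, f i x ^ 2 ∂ν i + ∑ i, ∫ x, g i x ^ 2 ∂ν i) / 2 := by
  rw [← Finset.sum_add_distrib, Finset.sum_div]
  refine (Finset.abs_sum_le_sum_abs _ _).trans (Finset.sum_le_sum fun i _ => ?_)
  refine (abs_integral_le_integral_abs).trans ?_
  rw [← integral_add (hf i).integrable_sq (hg i).integrable_sq, ← integral_div]
  refine integral_mono ((hf i).integrable_mul (hg i)).abs
    (((hf i).integrable_sq.add (hg i).integrable_sq).div_const 2) fun x => ?_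
  rw [abs_mul]
  nlinarith [sq_nonneg (|f i x| - |g i x|), sq_abs (f i x), sq_abs (g i x)]

end SquareIntegrable

theorem tendsto_apply_zero_of_forall_abs_le_mul {X : Type*} {F : ℕ → X → ℝ} {N : X → ℝ}
    {P : X → Prop} (hF : ∀ ε > (0 : ℝ), ∃ n₀ : ℕ, ∀ n ≥ n₀, ∀ x, P x → |F n x| ≤ ε * N x)
    {x : ℕ → X} (hx : ∀ n, P (x n)) {M : ℝ} (hM : ∀ n, N (x n) ≤ M) :
    Tendsto (fun n => F n (x n)) atTop (𝓝 0) := by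
  rw [Metric.tendsto_atTop]
  intro ε hε
  obtain ⟨n₀, hn₀⟩ := hF (ε / (|M| + 1)) (by positivity)
  refine ⟨n₀, fun n hn => ?_⟩
  have hM' : N (x n) < |M| + 1 := by linarith [le_abs_self M, hM n]
  calc dist (F n (x n)) 0 = |F n (x n)| := by rw [Real.dist_eq, sub_zero]
    _ ≤ ε / (|M| + 1) * N (x n) := hn₀ n hn (x n) (hx n)
    _ < ε / (|M| + 1) * (|M| + 1) := by gcongr
    _ = ε := div_mul_cancel₀ ε (by positivity)

namespace MetricGraph

variable {G : MetricGraph}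

theorem l2sq_nonneg (u : G.Fun) : 0 ≤ G.l2sq u :=
  Finset.sum_nonneg fun _ _ => integral_nonneg fun _ => sq_nonneg _

theorem dsq_nonneg (u : G.Fun) : 0 ≤ G.dsq u :=
  Finset.sum_nonneg fun _ _ => integral_nonneg fun _ => sq_nonneg _

theorem h1sq_nonneg (u : G.Fun) : 0 ≤ G.h1sq u :=
  add_nonneg (G.dsq_nonneg u) (G.l2sq_nonneg u)

theorem h1norm_nonneg (u : G.Fun) : 0 ≤ G.h1norm u :=
  Real.sqrt_nonneg _

theorem sq_h1norm (u : G.Fun) : G.h1norm u ^ 2 = G.h1sq u :=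
  Real.sq_sqrt (G.h1sq_nonneg u)

theorem IsH1.sub {a b : G.Fun} (ha : G.IsH1 a) (hb : G.IsH1 b) : G.IsH1 (a - b) := by
  obtain ⟨ha₁, ha₂, ha₃, ha₄, ha₅, ha₆⟩ := ha
  obtain ⟨hb₁, hb₂, hb₃, hb₄, hb₅, hb₆⟩ := hb
  refine ⟨fun e => (ha₁ e).sub (hb₁ e), fun e x hx => (ha₂ e x hx).sub (hb₂ e x hx),
    fun e => (ha₃ e).sub (hb₃ e), fun e => (ha₄ e).sub (hb₄ e), fun e => ?_, fun e v hv => ?_⟩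
  · exact congrArg₂ (· - ·) (ha₅ e) (hb₅ e)
  · exact congrArg₂ (· - ·) (ha₆ e v hv) (hb₆ e v hv)

theorem IsH1.dsq_sub {a b : G.Fun} (ha : G.IsH1 a) (hb : G.IsH1 b) :
    G.dsq (a - b) = G.dinner a (a - b) - G.dinner b (a - b) :=
  sum_integral_sub_sq ha.2.2.2.1 hb.2.2.2.1

theorem IsH1.l2sq_sub {a b : G.Fun} (ha : G.IsH1 a) (hb : G.IsH1 b) :
    G.l2sq (a - b) = G.l2inner a (a - b) - G.l2inner b (a - b) :=
  sum_integral_sub_sq ha.2.2.1 hb.2.2.1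

theorem IsH1.h1sq_sub_le {a b : G.Fun} (ha : G.IsH1 a) (hb : G.IsH1 b) :
    G.h1sq (a - b) ≤ 2 * (G.h1sq a + G.h1sq b) := by
  have hd : G.dsq (a - b) ≤ 2 * (G.dsq a + G.dsq b) :=
    sum_integral_sub_sq_le ha.2.2.2.1 hb.2.2.2.1
  have hl : G.l2sq (a - b) ≤ 2 * (G.l2sq a + G.l2sq b) :=
    sum_integral_sub_sq_le ha.2.2.1 hb.2.2.1
  rw [h1sq, h1sq, h1sq]
  linarith

theorem IsH1.h1norm_sub_le {a b : G.Fun} (ha : G.IsH1 a) (hb : G.IsH1 b) :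
    G.h1norm (a - b) ≤ 2 * (G.h1norm a + G.h1norm b) := by
  have hna := G.h1norm_nonneg a
  have hnb := G.h1norm_nonneg b
  rw [h1norm, Real.sqrt_le_left (by positivity)]
  calc G.h1sq (a - b) ≤ 2 * (G.h1norm a ^ 2 + G.h1norm b ^ 2) := by
        rw [sq_h1norm, sq_h1norm]; exact ha.h1sq_sub_le hb
    _ ≤ (2 * (G.h1norm a + G.h1norm b)) ^ 2 := by nlinarith

theorem IsH1.abs_l2inner_le {a b : G.Fun} (ha : G.IsH1 a) (hb : G.IsH1 b) :
    |G.l2inner a b| ≤ (G.h1norm a ^ 2 + G.h1norm b ^ 2) / 2 := by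
  have h : |G.l2inner a b| ≤ (G.l2sq a + G.l2sq b) / 2 :=
    abs_sum_integral_mul_le ha.2.2.1 hb.2.2.1
  rw [sq_h1norm, sq_h1norm, h1sq, h1sq]
  linarith [G.dsq_nonneg a, G.dsq_nonneg b]

theorem tendsto_mul_l2inner {c : ℕ → ℝ} (hc : Tendsto c atTop (𝓝 0)) {x y : ℕ → G.Fun}
    (hx : ∀ n, G.IsH1 (x n)) (hy : ∀ n, G.IsH1 (y n)) {A B : ℝ} (hA : ∀ n, G.h1norm (x n) ≤ A)
    (hB : ∀ n, G.h1norm (y n) ≤ B) :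
    Tendsto (fun n => c n * G.l2inner (x n) (y n)) atTop (𝓝 0) := by
  refine hc.zero_mul_isBoundedUnder_le (isBoundedUnder_of ⟨(A ^ 2 + B ^ 2) / 2, fun n => ?_⟩)
  have hA' := pow_le_pow_left₀ (G.h1norm_nonneg _) (hA n) 2
  have hB' := pow_le_pow_left₀ (G.h1norm_nonneg _) (hB n) 2
  have := (hx n).abs_l2inner_le (hy n)
  simp only [Function.comp_apply, Real.norm_eq_abs]
  linarith

theorem exists_src_eq_or_dst_eq (hconn : G.Connected) (e₀ : G.E) (v : G.V) :
    ∃ e, G.src e = v ∨ G.dst e = some v := by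
  rcases (hconn v (G.src e₀)).cases_head with h | ⟨w, ⟨e, h | h⟩, -⟩
  · exact ⟨e₀, Or.inl h.symm⟩
  · exact ⟨e, Or.inl h.1⟩
  · exact ⟨e, Or.inr h.2⟩

theorem tendsto_vVal (hconn : G.Connected) (e₀ : G.E) {u : ℕ → G.Fun} {w : G.Fun}
    (hu : ∀ n, G.IsH1 (u n)) (hw : G.IsH1 w)
    (hpt : ∀ e, ∀ x ∈ G.interval e,
      Tendsto (fun n => G.eFun (u n) e x) atTop (𝓝 (G.eFun w e x))) (v : G.V) :
    Tendsto (fun n => G.vVal (u n) v) atTop (𝓝 (G.vVal w v)) := by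
  obtain ⟨e, he | he⟩ := exists_src_eq_or_dst_eq hconn e₀ v
  · have h0 : (0 : ℝ) ∈ G.interval e := by
      unfold interval; split_ifs <;> simp
    subst he
    simpa only [(hu _).2.2.2.2.1, hw.2.2.2.2.1] using hpt e 0 h0
  · have hℓ : (G.length e).toReal ∈ G.interval e := by
      have hfin : G.length e ≠ ⊤ := fun h => by simp [(G.dst_none_iff e).2 h] at he
      simp [interval, hfin]
    simpa only [(hu _).2.2.2.2.2 e v he, hw.2.2.2.2.2 e v he] using hpt e _ hℓ

theorem tendsto_vertexTerm_sub {p : ℝ} (hp : 2 ≤ p) {u : ℕ → G.Fun} {w : G.Fun}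
    (hv : ∀ v, Tendsto (fun n => G.vVal (u n) v) atTop (𝓝 (G.vVal w v))) :
    Tendsto (fun n => G.vertexTerm p (u n) (u n - w) - G.vertexTerm p w (u n - w))
      atTop (𝓝 0) := by
  set φ : ℝ → ℝ := fun s => |s| ^ (p - 2) * s
  have hφ : Continuous φ :=
    (continuous_abs.rpow_const fun _ => Or.inr (by linarith)).mul continuous_id
  have hsum : ∀ n, G.vertexTerm p (u n) (u n - w) - G.vertexTerm p w (u n - w) =
      ∑ v, (φ (G.vVal (u n) v) - φ (G.vVal w v)) * (G.vVal (u n) v - G.vVal w v) := fun n => by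
    rw [vertexTerm, vertexTerm, ← Finset.sum_sub_distrib]
    exact Finset.sum_congr rfl fun v _ => by simp only [φ, vVal, Prod.snd_sub, Pi.sub_apply]; ring
  refine Tendsto.congr (fun n => (hsum n).symm) ?_
  rw [← Finset.sum_const_zero]
  refine tendsto_finsetSum _ fun v _ => ?_
  simpa using (((hφ.tendsto _).comp (hv v)).sub_const (φ (G.vVal w v))).mul
    ((hv v).sub_const (G.vVal w v))

theorem IsWeakSolution.dsq_sub_add_mul_l2sq_sub {p ρ lam κ : ℝ} {a b : G.Fun}
    (hsol : G.IsWeakSolution p ρ lam b) (ha : G.IsH1 a) (hb : G.IsH1 b) :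
    G.dsq (a - b) + lam * G.l2sq (a - b) =
      (G.energyDeriv p ρ a (a - b) + κ * G.l2inner a (a - b)) +
        (lam - κ) * G.l2inner a (a - b) +
        ρ * (G.vertexTerm p a (a - b) - G.vertexTerm p b (a - b)) := by
  rw [ha.dsq_sub hb, ha.l2sq_sub hb, energyDeriv]
  linear_combination -hsol (a - b) (ha.sub hb)

theorem tendsto_h1norm_of_tendsto_dsq_add_mul_l2sq {lam : ℝ} (hlam : 0 < lam) {w : ℕ → G.Fun}
    (h : Tendsto (fun n => G.dsq (w n) + lam * G.l2sq (w n)) atTop (𝓝 0)) :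
    Tendsto (fun n => G.h1norm (w n)) atTop (𝓝 0) := by
  have hbound : ∀ n, G.h1sq (w n) ≤ (1 + lam⁻¹) * (G.dsq (w n) + lam * G.l2sq (w n)) :=
    fun n => by
      rw [h1sq, add_mul, one_mul, mul_add, ← mul_assoc, inv_mul_cancel₀ hlam.ne', one_mul]
      linarith [mul_nonneg (inv_nonneg.2 hlam.le) (G.dsq_nonneg (w n)),
        mul_nonneg hlam.le (G.l2sq_nonneg (w n))]
  have hsq : Tendsto (fun n => G.h1sq (w n)) atTop (𝓝 0) :=
    squeeze_zero (fun n => G.h1sq_nonneg _) hbound (by simpa using h.const_mul (1 + lam⁻¹))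
  simpa [h1norm, Function.comp_def] using (Real.continuous_sqrt.tendsto 0).comp hsq

end MetricGraph

theorem palais_smale_strong_convergence_general (G : MetricGraph) (hconn : G.Connected)
    (hnc : G.Noncompact) (p : ℝ) (hp : 4 < p) (ρ : ℝ)
    (u : ℕ → G.Fun) (lam : ℕ → ℝ) (hH1 : ∀ n, G.IsH1 (u n))
    (hbdd : ∃ C : ℝ, ∀ n, G.h1norm (u n) ≤ C)
    (hPS : ∀ ε > (0:ℝ), ∃ N : ℕ, ∀ n ≥ N, ∀ η : G.Fun, G.IsH1 η →
      |G.energyDeriv p ρ (u n) η + lam n * G.l2inner (u n) η| ≤ ε * G.h1norm η)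
    (uρ : G.Fun) (huρ : G.IsH1 uρ) (lamρ : ℝ)
    (hlamlim : Filter.Tendsto lam Filter.atTop (nhds lamρ))
    (hptwise : ∀ e, ∀ x ∈ G.interval e,
      Filter.Tendsto (fun n => G.eFun (u n) e x) Filter.atTop (nhds (G.eFun uρ e x)))
    (hsol : G.IsWeakSolution p ρ lamρ uρ) :
    Filter.Tendsto (fun n => G.dsq (u n - uρ) + lamρ * G.l2sq (u n - uρ))
      Filter.atTop (nhds 0) ∧
    (0 < lamρ →
      Filter.Tendsto (fun n => G.h1norm (u n - uρ)) Filter.atTop (nhds 0)) := by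
  obtain ⟨C, hC⟩ := hbdd
  obtain ⟨e₀, -⟩ := hnc
  have hdiff : ∀ n, G.IsH1 (u n - uρ) := fun n => (hH1 n).sub huρ
  have hdiff_bdd : ∀ n, G.h1norm (u n - uρ) ≤ 2 * (C + G.h1norm uρ) := fun n =>
    ((hH1 n).h1norm_sub_le huρ).trans (by linarith [hC n])
  have hPS_diff : Tendsto (fun n => G.energyDeriv p ρ (u n) (u n - uρ) +
      lam n * G.l2inner (u n) (u n - uρ)) atTop (𝓝 0) :=
    tendsto_apply_zero_of_forall_abs_le_mul hPS hdiff hdiff_bdd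
  have hmult : Tendsto (fun n => (lamρ - lam n) * G.l2inner (u n) (u n - uρ)) atTop (𝓝 0) :=
    MetricGraph.tendsto_mul_l2inner (by simpa using hlamlim.const_sub lamρ) hH1 hdiff hC hdiff_bdd
  have hvert := MetricGraph.tendsto_vertexTerm_sub (by linarith)
    (MetricGraph.tendsto_vVal hconn e₀ hH1 huρ hptwise)
  have hmain : Tendsto (fun n => G.dsq (u n - uρ) + lamρ * G.l2sq (u n - uρ)) atTop (𝓝 0) := by
    refine Tendsto.congr
      (fun n => (hsol.dsq_sub_add_mul_l2sq_sub (κ := lam n) (hH1 n) huρ).symm) ?_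
    simpa using (hPS_diff.add hmult).add (hvert.const_mul ρ)
  exact ⟨hmain, fun hpos => MetricGraph.tendsto_h1norm_of_tendsto_dsq_add_mul_l2sq hpos hmain⟩

/-- Strong convergence of bounded constrained Palais–Smale sequences:
if the limit multiplier satisfies `λ_ρ ≥ 0`, then
`∫_G |(u_n − u_ρ)'|² dx + λ_ρ ∫_G |u_n − u_ρ|² dx → 0`; in particular if `λ_ρ > 0` then
`u_n → u_ρ` strongly in `H¹(G)`. -/
theorem palais_smale_strong_convergence (G : MetricGraph) (hconn : G.Connected)
    (hnc : G.Noncompact) (p : ℝ) (hp : 4 < p) (μ : ℝ) (hμ : 0 < μ)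
    (ρ : ℝ) (hρ : ρ ∈ Set.Icc (1 / 2 : ℝ) 1)
    (u : ℕ → G.Fun) (lam : ℕ → ℝ) (c : ℝ) (hc : 0 < c)
    (hH1 : ∀ n, G.IsH1 (u n)) (hmass : ∀ n, G.l2sq (u n) = μ)
    (hbdd : ∃ C : ℝ, ∀ n, G.h1norm (u n) ≤ C)
    (hlevel : Filter.Tendsto (fun n => G.energy p ρ (u n)) Filter.atTop (nhds c))
    (hlam : ∀ n, lam n = -(1 / μ) * G.energyDeriv p ρ (u n) (u n))
    (hPS : ∀ ε > (0:ℝ), ∃ N : ℕ, ∀ n ≥ N, ∀ η : G.Fun, G.IsH1 η →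
      |G.energyDeriv p ρ (u n) η + lam n * G.l2inner (u n) η| ≤ ε * G.h1norm η)
    (uρ : G.Fun) (huρ : G.IsH1 uρ) (lamρ : ℝ)
    (hlamlim : Filter.Tendsto lam Filter.atTop (nhds lamρ))
    (hweak : ∀ w : G.Fun, G.IsH1 w →
      Filter.Tendsto (fun n => G.h1inner (u n) w) Filter.atTop (nhds (G.h1inner uρ w)))
    (hptwise : ∀ e, ∀ x ∈ G.interval e,
      Filter.Tendsto (fun n => G.eFun (u n) e x) Filter.atTop (nhds (G.eFun uρ e x)))
    (hsol : G.IsWeakSolution p ρ lamρ uρ)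
    (hlamρ : 0 ≤ lamρ) :
    Filter.Tendsto (fun n => G.dsq (u n - uρ) + lamρ * G.l2sq (u n - uρ))
      Filter.atTop (nhds 0) ∧
    (0 < lamρ →
      Filter.Tendsto (fun n => G.h1norm (u n - uρ)) Filter.atTop (nhds 0)) :=
  palais_smale_strong_convergence_general G hconn hnc p hp ρ u lam hH1 hbdd hPS uρ huρ lamρ hlamlim
    hptwise hsol
end

section
/- Let G = (V,E) be a noncompact connected metric graph with finitely many edges, p > 2 and μ > 0. For any β > 0 there exists a sequence of functions {φ₁, φ₂, …} ⊂ H¹(G) such that for all i, j ∈ ℕ⁺ and all ρ ∈ [1/2,1]: (i) ‖φ_i‖₂² = μ, ‖φ_i'‖₂ = β, and E_ρ(φ_i, G) = β²/2; (ii) each φ_i has compact support and supp(φ_i) ∩ supp(φ_j) = ∅ whenever i ≠ j; (iii) for any N ≥ 2 and any a = (a₁,…,a_{N−1}) ∈ S^{N−2}, ‖(Σ_{i=1}^{N−1} a_i φ_i)'‖₂ = β and E_ρ(Σ_{i=1}^{N−1} a_i φ_i, G) = β²/2. -/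
/-! Place disjoint translates of one rescaled smooth bump along a half-line. They vanish at
every vertex, so the vertex term of the energy drops out and `E_ρ(u) = ½‖u'‖₂²` for every `ρ`;
disjointness of the supports gives `‖(Σ aᵢ φᵢ)'‖₂² = Σ aᵢ² ‖φᵢ'‖₂²`. The amplitude and the
dilation of the bump are tuned so that `‖φᵢ‖₂² = μ` and `‖φᵢ'‖₂² = β²`. -/


open MeasureTheory Filter Topology Set
open scoped ENNReal

open Function

lemma Finset.sq_sum_of_pairwise_mul_eq_zero {ι : Type*} {s : Finset ι} {f : ι → ℝ}
    (hf : (s : Set ι).Pairwise fun i j => f i * f j = 0) :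
    (∑ i ∈ s, f i) ^ 2 = ∑ i ∈ s, f i ^ 2 := by
  rw [sq, Finset.sum_mul_sum]
  refine Finset.sum_congr rfl fun i hi => ?_
  rw [Finset.sum_eq_single_of_mem i hi fun j hj hji => hf hi hj hji.symm, sq]

lemma integral_sq_pos_of_ne_zero {f : ℝ → ℝ} {x₀ : ℝ} (hf : Continuous f)
    (hcs : HasCompactSupport f) (hx₀ : f x₀ ≠ 0) : 0 < ∫ x, f x ^ 2 := by
  have hcs2 : HasCompactSupport fun x => f x ^ 2 := hcs.comp_left (zero_pow two_ne_zero)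
  exact (hf.pow 2).integral_pos_of_hasCompactSupport_nonneg_nonzero hcs2
    (fun x => sq_nonneg (f x)) (pow_ne_zero 2 hx₀)

lemma exists_profile : ∃ b : ℝ → ℝ, ContDiff ℝ 1 b ∧ tsupport b ⊆ Ioo 0 1 ∧
    0 < ∫ x, b x ^ 2 ∧ 0 < ∫ x, deriv b x ^ 2 := by
  obtain ⟨b, hsupp, hcs, hb, -, hb_half⟩ := exists_contDiff_tsupport_subset (n := 1)
    (Ioo_mem_nhds (by norm_num : (0 : ℝ) < 1 / 2) (by norm_num : (1 / 2 : ℝ) < 1))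
  have hb0 : b 0 = 0 := image_eq_zero_of_notMem_tsupport fun h => (hsupp h).1.false
  obtain ⟨x₀, hx₀⟩ : ∃ x, deriv b x ≠ 0 := by
    by_contra! h
    have := is_const_of_deriv_eq_zero (hb.differentiable one_ne_zero) h (1 / 2) 0
    rw [hb_half, hb0] at this
    exact one_ne_zero this
  exact ⟨b, hb, hsupp,
    integral_sq_pos_of_ne_zero hb.continuous hcs (x₀ := 1 / 2) (by rw [hb_half]; exact one_ne_zero),
    integral_sq_pos_of_ne_zero (hb.continuous_deriv le_rfl) hcs.deriv hx₀⟩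

lemma exists_amplitude_frequency {A B μ β : ℝ} (hA : 0 < A) (hB : 0 < B) (hμ : 0 < μ)
    (hβ : 0 < β) : ∃ c ω : ℝ, 0 < ω ∧ c ^ 2 / ω * A = μ ∧ (c * ω) ^ 2 / ω * B = β ^ 2 := by
  set ω := β * √(A / (B * μ))
  have hω : 0 < ω := by positivity
  have hω2 : ω ^ 2 = β ^ 2 * (A / (B * μ)) := by rw [mul_pow, Real.sq_sqrt (by positivity)]
  refine ⟨√(μ * ω / A), ω, hω, ?_, ?_⟩
  · rw [Real.sq_sqrt (by positivity)]; field_simp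
  · rw [mul_pow, Real.sq_sqrt (by positivity)]
    field_simp
    rw [hω2]; field_simp

def bumpTrain (g : ℝ → ℝ) (c ω : ℝ) (i : ℕ) (x : ℝ) : ℝ := c * g (ω * x - (i + 1))

section BumpTrain

variable {g : ℝ → ℝ} {c ω : ℝ} {i : ℕ}

lemma mem_Ioo_of_bumpTrain_ne_zero (hg : support g ⊆ Ioo 0 1) {x : ℝ}
    (h : bumpTrain g c ω i x ≠ 0) : ω * x - (i + 1) ∈ Ioo 0 1 :=
  hg (right_ne_zero_of_mul h)

lemma bumpTrain_eq_zero_or_eq_zero (hg : support g ⊆ Ioo 0 1) {j : ℕ} (hij : i ≠ j) (x : ℝ) :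
    bumpTrain g c ω i x = 0 ∨ bumpTrain g c ω j x = 0 := by
  by_contra! h
  obtain ⟨hi₀, hi₁⟩ := mem_Ioo_of_bumpTrain_ne_zero hg h.1
  obtain ⟨hj₀, hj₁⟩ := mem_Ioo_of_bumpTrain_ne_zero hg h.2
  have hij' : (i : ℝ) < j + 1 ∧ (j : ℝ) < i + 1 := ⟨by linarith, by linarith⟩
  norm_cast at hij'
  omega

lemma bumpTrain_eq_zero_of_nonpos (hg : support g ⊆ Ioo 0 1) (hω : 0 ≤ ω) {x : ℝ}
    (hx : x ≤ 0) : bumpTrain g c ω i x = 0 := by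
  by_contra h
  have := (mem_Ioo_of_bumpTrain_ne_zero hg h).1
  nlinarith [i.cast_nonneg (α := ℝ)]

lemma bumpTrain_eq_zero_of_le (hg : support g ⊆ Ioo 0 1) (hω : 0 < ω) {x : ℝ}
    (hx : (i + 2) / ω ≤ x) : bumpTrain g c ω i x = 0 := by
  by_contra h
  have := (mem_Ioo_of_bumpTrain_ne_zero hg h).2
  rw [div_le_iff₀ hω] at hx
  linarith

lemma hasCompactSupport_bumpTrain (hg : support g ⊆ Ioo 0 1) (hω : 0 < ω) :
    HasCompactSupport (bumpTrain g c ω i) := by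
  refine HasCompactSupport.intro (isCompact_Icc (a := 0) (b := (i + 2) / ω)) fun x hx => ?_
  rcases not_and_or.1 hx with hx | hx
  · exact bumpTrain_eq_zero_of_nonpos hg hω.le (not_le.1 hx).le
  · exact bumpTrain_eq_zero_of_le hg hω (not_le.1 hx).le

lemma continuous_bumpTrain (hg : Continuous g) : Continuous (bumpTrain g c ω i) := by
  unfold bumpTrain; fun_prop

lemma hasDerivAt_bumpTrain (hg : Differentiable ℝ g) (x : ℝ) :
    HasDerivAt (bumpTrain g c ω i) (bumpTrain (deriv g) (c * ω) ω i x) x := by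
  have hin : HasDerivAt (fun y : ℝ => ω * y - (i + 1)) ω x := by
    simpa using ((hasDerivAt_id x).const_mul ω).sub_const ((i : ℝ) + 1)
  exact (((hg _).hasDerivAt.comp x hin).const_mul c).congr_deriv (by simp only [bumpTrain]; ring)

lemma integral_Ici_bumpTrain_sq (hg : support g ⊆ Ioo 0 1) (hω : 0 < ω) :
    ∫ x in Ici 0, bumpTrain g c ω i x ^ 2 = c ^ 2 / ω * ∫ s, g s ^ 2 := by
  rw [setIntegral_eq_integral_of_forall_compl_eq_zero fun x hx => by
    rw [bumpTrain_eq_zero_of_nonpos hg hω.le (not_le.1 hx).le, sq, zero_mul]]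
  unfold bumpTrain
  simp only [mul_pow]
  rw [integral_const_mul, Measure.integral_comp_mul_left (fun y => g (y - (i + 1)) ^ 2),
    integral_sub_right_eq_self (fun y => g y ^ 2), smul_eq_mul, abs_of_pos (inv_pos.2 hω)]
  ring

end BumpTrain

namespace MetricGraph

variable {G : MetricGraph}

lemma interval_of_length_eq_top {e : G.E} (he : G.length e = ⊤) : G.interval e = Ici 0 := by
  simp [interval, he]

section OnEdge

open scoped Classical

noncomputable def onEdge (e₀ : G.E) (f f' : ℝ → ℝ) : G.Fun :=
  (fun e => if e = e₀ then f else 0, fun e => if e = e₀ then f' else 0, 0)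

variable {e₀ : G.E} {f f' : ℝ → ℝ}

@[simp]
lemma eFun_onEdge (e : G.E) : G.eFun (onEdge e₀ f f') e = if e = e₀ then f else 0 := rfl

@[simp]
lemma eDeriv_onEdge (e : G.E) : G.eDeriv (onEdge e₀ f f') e = if e = e₀ then f' else 0 := rfl

@[simp]
lemma vVal_onEdge : G.vVal (onEdge e₀ f f') = 0 := rfl

lemma l2sq_onEdge : G.l2sq (onEdge e₀ f f') = ∫ x in G.interval e₀, f x ^ 2 := by
  rw [l2sq, Fintype.sum_eq_single e₀ fun e he => by simp [he]]
  simp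

lemma dsq_onEdge : G.dsq (onEdge e₀ f f') = ∫ x in G.interval e₀, f' x ^ 2 := by
  rw [dsq, Fintype.sum_eq_single e₀ fun e he => by simp [he]]
  simp

lemma isH1_onEdge (hcont : ContinuousOn f (G.interval e₀))
    (hderiv : ∀ x ∈ interior (G.interval e₀), HasDerivAt f (f' x) x)
    (hf : MemLp f 2 (volume.restrict (G.interval e₀)))
    (hf' : MemLp f' 2 (volume.restrict (G.interval e₀)))
    (h0 : f 0 = 0) (hℓ : f (G.length e₀).toReal = 0) : G.IsH1 (onEdge e₀ f f') := by
  refine ⟨fun e => ?_, fun e x hx => ?_, fun e => ?_, fun e => ?_, fun e => ?_, fun e v _ => ?_⟩ <;>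
    rcases eq_or_ne e e₀ with rfl | he
  all_goals simp_all [MemLp.zero, continuous_zero.continuousOn]

end OnEdge

lemma energy_eq_half_dsq {p : ℝ} (hp : p ≠ 0) (ρ : ℝ) {u : G.Fun} (hu : G.vVal u = 0) :
    G.energy p ρ u = G.dsq u / 2 := by
  simp [energy, vertexLp, hu, Real.zero_rpow hp]
  ring

section Sum

variable {ι : Type*} (s : Finset ι) (a : ι → ℝ) (u : ι → G.Fun)

lemma eDeriv_sum_smul (e : G.E) (x : ℝ) :
    G.eDeriv (∑ i ∈ s, a i • u i) e x = ∑ i ∈ s, a i * G.eDeriv (u i) e x := by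
  simp [eDeriv, Prod.snd_sum, Prod.fst_sum, Finset.sum_apply]

lemma vVal_sum_smul (hu : ∀ i ∈ s, G.vVal (u i) = 0) : G.vVal (∑ i ∈ s, a i • u i) = 0 := by
  simp only [vVal] at hu ⊢
  ext v
  simp +contextual [Prod.snd_sum, Finset.sum_apply, hu]

lemma dsq_sum_smul_of_pairwise
    (hu : ∀ i ∈ s, ∀ e, MemLp (G.eDeriv (u i) e) 2 (volume.restrict (G.interval e)))
    (hdisj : (s : Set ι).Pairwise fun i j =>
      ∀ e x, G.eDeriv (u i) e x = 0 ∨ G.eDeriv (u j) e x = 0) :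
    G.dsq (∑ i ∈ s, a i • u i) = ∑ i ∈ s, a i ^ 2 * G.dsq (u i) := by
  have hsq : ∀ e x, G.eDeriv (∑ i ∈ s, a i • u i) e x ^ 2 =
      ∑ i ∈ s, a i ^ 2 * G.eDeriv (u i) e x ^ 2 := fun e x => by
    rw [eDeriv_sum_smul, Finset.sq_sum_of_pairwise_mul_eq_zero]
    · simp only [mul_pow]
    · intro i hi j hj hij
      rcases hdisj hi hj hij e x with h | h <;> simp [h]
  simp only [dsq, hsq, Finset.mul_sum]
  rw [Finset.sum_comm]
  refine Finset.sum_congr rfl fun e _ => ?_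
  rw [integral_finsetSum _ fun i hi => ((hu i hi e).integrable_sq.const_mul _)]
  simp only [integral_const_mul]

end Sum

section BumpTrainOn

variable {e₀ : G.E} {b : ℝ → ℝ} {c ω : ℝ}

noncomputable def bumpTrainOn (e₀ : G.E) (b : ℝ → ℝ) (c ω : ℝ) (i : ℕ) : G.Fun :=
  onEdge e₀ (bumpTrain b c ω i) (bumpTrain (deriv b) (c * ω) ω i)

lemma isH1_bumpTrainOn (he₀ : G.length e₀ = ⊤) (hb : ContDiff ℝ 1 b)
    (hsupp : tsupport b ⊆ Ioo 0 1) (hω : 0 < ω) (i : ℕ) : G.IsH1 (bumpTrainOn e₀ b c ω i) := by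
  have hb_supp : support b ⊆ Ioo 0 1 := (subset_tsupport b).trans hsupp
  have hcont := continuous_bumpTrain (c := c) (ω := ω) (i := i) hb.continuous
  have hcont' := continuous_bumpTrain (c := c * ω) (ω := ω) (i := i) (hb.continuous_deriv le_rfl)
  have hzero := bumpTrain_eq_zero_of_nonpos (c := c) (i := i) hb_supp hω.le le_rfl
  refine isH1_onEdge hcont.continuousOn
    (fun x _ => hasDerivAt_bumpTrain (hb.differentiable one_ne_zero) x)
    ((hcont.memLp_of_hasCompactSupport (hasCompactSupport_bumpTrain hb_supp hω)).restrict _)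
    ((hcont'.memLp_of_hasCompactSupport
      (hasCompactSupport_bumpTrain (support_deriv_subset.trans hsupp) hω)).restrict _)
    -- `(⊤ : ℝ≥0∞).toReal = 0`, so the far-endpoint condition is again the one at `0`
    hzero (by simpa [he₀] using hzero)

lemma l2sq_bumpTrainOn (he₀ : G.length e₀ = ⊤) (hsupp : support b ⊆ Ioo 0 1) (hω : 0 < ω)
    (i : ℕ) : G.l2sq (bumpTrainOn e₀ b c ω i) = c ^ 2 / ω * ∫ x, b x ^ 2 := by
  rw [bumpTrainOn, l2sq_onEdge, interval_of_length_eq_top he₀, integral_Ici_bumpTrain_sq hsupp hω]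

lemma dsq_bumpTrainOn (he₀ : G.length e₀ = ⊤) (hsupp : support (deriv b) ⊆ Ioo 0 1)
    (hω : 0 < ω) (i : ℕ) :
    G.dsq (bumpTrainOn e₀ b c ω i) = (c * ω) ^ 2 / ω * ∫ x, deriv b x ^ 2 := by
  rw [bumpTrainOn, dsq_onEdge, interval_of_length_eq_top he₀, integral_Ici_bumpTrain_sq hsupp hω]

lemma eFun_bumpTrainOn_eq_zero_of_le (hsupp : support b ⊆ Ioo 0 1) (hω : 0 < ω) {i : ℕ}
    (e : G.E) {x : ℝ} (hx : (i + 2) / ω ≤ x) : G.eFun (bumpTrainOn e₀ b c ω i) e x = 0 := by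
  by_cases he : e = e₀ <;> simp [bumpTrainOn, he, bumpTrain_eq_zero_of_le hsupp hω hx]

lemma eFun_bumpTrainOn_eq_zero_or_eq_zero (hsupp : support b ⊆ Ioo 0 1) {i j : ℕ}
    (hij : i ≠ j) (e : G.E) (x : ℝ) :
    G.eFun (bumpTrainOn e₀ b c ω i) e x = 0 ∨ G.eFun (bumpTrainOn e₀ b c ω j) e x = 0 := by
  by_cases he : e = e₀ <;> simp [bumpTrainOn, he, bumpTrain_eq_zero_or_eq_zero hsupp hij]

lemma eDeriv_bumpTrainOn_eq_zero_or_eq_zero (hsupp : support (deriv b) ⊆ Ioo 0 1) {i j : ℕ}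
    (hij : i ≠ j) (e : G.E) (x : ℝ) :
    G.eDeriv (bumpTrainOn e₀ b c ω i) e x = 0 ∨ G.eDeriv (bumpTrainOn e₀ b c ω j) e x = 0 := by
  by_cases he : e = e₀ <;> simp [bumpTrainOn, he, bumpTrain_eq_zero_or_eq_zero hsupp hij]

end BumpTrainOn

end MetricGraph

theorem disjoint_family_constant_energy_general (G : MetricGraph)
    (hnc : G.Noncompact) (p : ℝ) (hp : 2 < p) (μ : ℝ) (hμ : 0 < μ)
    (β : ℝ) (hβ : 0 < β) :
    ∃ φ : ℕ → G.Fun,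
      (∀ i, G.IsH1 (φ i) ∧ G.l2sq (φ i) = μ ∧ Real.sqrt (G.dsq (φ i)) = β ∧
        ∀ ρ ∈ Set.Icc (1 / 2 : ℝ) 1, G.energy p ρ (φ i) = β ^ 2 / 2) ∧
      (∀ i, ∃ R : ℝ, ∀ e, ∀ x ∈ G.interval e, R ≤ x → G.eFun (φ i) e x = 0) ∧
      (∀ i j, i ≠ j → ∀ e, ∀ x ∈ G.interval e,
        G.eFun (φ i) e x = 0 ∨ G.eFun (φ j) e x = 0) ∧
      (∀ N : ℕ, 2 ≤ N → ∀ a : Fin (N - 1) → ℝ, ∑ i, (a i) ^ 2 = 1 →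
        Real.sqrt (G.dsq (∑ i, a i • φ i)) = β ∧
        ∀ ρ ∈ Set.Icc (1 / 2 : ℝ) 1, G.energy p ρ (∑ i, a i • φ i) = β ^ 2 / 2) := by
  obtain ⟨e₀, he₀⟩ := hnc
  obtain ⟨b, hb, hsupp, hA, hB⟩ := exists_profile
  have hb_supp : support b ⊆ Ioo 0 1 := (subset_tsupport b).trans hsupp
  have hb'_supp : support (deriv b) ⊆ Ioo 0 1 := support_deriv_subset.trans hsupp
  obtain ⟨c, ω, hω, hc_l2, hc_dsq⟩ := exists_amplitude_frequency hA hB hμ hβ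
  set φ := MetricGraph.bumpTrainOn e₀ b c ω
  have hH1 : ∀ i, G.IsH1 (φ i) := MetricGraph.isH1_bumpTrainOn he₀ hb hsupp hω
  have hdsq : ∀ i, G.dsq (φ i) = β ^ 2 := fun i => by
    rw [MetricGraph.dsq_bumpTrainOn he₀ hb'_supp hω, hc_dsq]
  have henergy : ∀ u, G.vVal u = 0 → G.dsq u = β ^ 2 →
      ∀ ρ ∈ Icc (1 / 2 : ℝ) 1, G.energy p ρ u = β ^ 2 / 2 := fun u hu hdsq ρ _ => by
    rw [MetricGraph.energy_eq_half_dsq (by linarith) ρ hu, hdsq]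
  refine ⟨φ, fun i => ⟨hH1 i, ?_, by rw [hdsq, Real.sqrt_sq hβ.le], henergy _ rfl (hdsq i)⟩,
    fun i => ⟨(i + 2) / ω, fun e x _ hx =>
      MetricGraph.eFun_bumpTrainOn_eq_zero_of_le hb_supp hω e hx⟩,
    fun i j hij e x _ => MetricGraph.eFun_bumpTrainOn_eq_zero_or_eq_zero hb_supp hij e x,
    fun N _ a ha => ?_⟩
  · rw [MetricGraph.l2sq_bumpTrainOn he₀ hb_supp hω, hc_l2]
  have hdsum : G.dsq (∑ i, a i • φ i) = β ^ 2 := by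
    rw [MetricGraph.dsq_sum_smul_of_pairwise _ _ (fun i : Fin (N - 1) => φ i)
      (fun i _ => (hH1 i).2.2.2.1) fun i _ j _ hij =>
        MetricGraph.eDeriv_bumpTrainOn_eq_zero_or_eq_zero hb'_supp (Fin.val_injective.ne hij)]
    simp [hdsq, ← Finset.sum_mul, ha]
  exact ⟨by rw [hdsum, Real.sqrt_sq hβ.le],
    henergy _ (MetricGraph.vVal_sum_smul _ _ _ fun i _ => rfl) hdsum⟩

/-- For `p > 2`, `μ > 0` and any `β > 0` there is a sequence
`{φ_i} ⊂ H¹_μ(G)` of compactly supported functions with pairwise disjoint supports such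
that `‖φ_i'‖₂ = β`, `E_ρ(φ_i, G) = β²/2` for all `ρ ∈ [1/2,1]`, and every normalized
linear combination `Σ a_i φ_i` (with `a ∈ S^{N−2}`) again satisfies
`‖(Σ a_i φ_i)'‖₂ = β` and `E_ρ(Σ a_i φ_i, G) = β²/2`. -/
theorem disjoint_family_constant_energy (G : MetricGraph) (hconn : G.Connected)
    (hnc : G.Noncompact) (p : ℝ) (hp : 2 < p) (μ : ℝ) (hμ : 0 < μ)
    (β : ℝ) (hβ : 0 < β) :
    ∃ φ : ℕ → G.Fun,
      (∀ i, G.IsH1 (φ i) ∧ G.l2sq (φ i) = μ ∧ Real.sqrt (G.dsq (φ i)) = β ∧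
        ∀ ρ ∈ Set.Icc (1 / 2 : ℝ) 1, G.energy p ρ (φ i) = β ^ 2 / 2) ∧
      (∀ i, ∃ R : ℝ, ∀ e, ∀ x ∈ G.interval e, R ≤ x → G.eFun (φ i) e x = 0) ∧
      (∀ i j, i ≠ j → ∀ e, ∀ x ∈ G.interval e,
        G.eFun (φ i) e x = 0 ∨ G.eFun (φ j) e x = 0) ∧
      (∀ N : ℕ, 2 ≤ N → ∀ a : Fin (N - 1) → ℝ, ∑ i, (a i) ^ 2 = 1 →
        Real.sqrt (G.dsq (∑ i, a i • φ i)) = β ∧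
        ∀ ρ ∈ Set.Icc (1 / 2 : ℝ) 1, G.energy p ρ (∑ i, a i • φ i) = β ^ 2 / 2) :=
  disjoint_family_constant_energy_general G hnc p hp μ hμ β hβ
end

section
/- Let G = (V,E) be a noncompact connected metric graph with finitely many edges and non-empty compact core K (K is the subgraph consisting of all bounded edges of G, with vertex set V and bounded-edge set E_K), and let p > 2, ρ ∈ [1/2,1]. Suppose u ∈ H¹(G) is a weak solution of u'' = 0 on every edge together with the vertex conditions Σ_{e≻v} u_e'(v) = −ρ|u(v)|^{p−2}u(v) at every vertex v, i.e. ∫_G u'η' dx = ρΣ_{v∈V}|u(v)|^{p−2}u(v)η(v) for all η ∈ H¹(G). Then: (a) û := u|_V satisfies the combinatorial equation −Δ_d û(v) = ρ|û(v)|^{p−2}û(v) for every v ∈ V, where Δ_d f(v) := Σ_{w∈V, w∼v} (1/ℓ_{vw})(f(w) − f(v)); (b) ‖u'‖₂² = [û]²_{H¹(V)} where [f]²_{H¹(V)} := Σ_{vw∈E_K} (1/ℓ_{vw})(f(w) − f(v))²; and (c) there exists a constant S_{p,G} > 0, depending only on p and G (not on ρ or u), such that ½‖u'‖₂² − (ρ/p)Σ_{v∈V}|u(v)|^p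 ≤ S_{p,G}. -/
open MeasureTheory Filter Topology Set
open scoped ENNReal

namespace MetricGraph

/-- The (weighted) graph Laplacian of the compact core:
`Δ_d f(v) = Σ_{w ∼ v} (1/ℓ_{vw}) (f(w) − f(v))`, the sum running over all bounded edges
incident at `v` (both incidences of a loop contribute). -/
noncomputable def discLap (G : MetricGraph) (f : G.V → ℝ) (v : G.V) : ℝ :=
  ∑ e, ((if G.src e = v then
          (G.dst e).elim 0 (fun w => ((G.length e).toReal)⁻¹ * (f w - f v))
        else 0) +
        (if G.dst e = some v then ((G.length e).toReal)⁻¹ * (f (G.src e) - f v) else 0))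

/-- The combinatorial `H¹`-seminorm squared:
`[f]²_{H¹(V)} = Σ_{vw ∈ E_K} (1/ℓ_{vw}) (f(w) − f(v))²`, summed over bounded edges. -/
noncomputable def combSemiNormSq (G : MetricGraph) (f : G.V → ℝ) : ℝ :=
  ∑ e, (G.dst e).elim 0 (fun w => ((G.length e).toReal)⁻¹ * (f w - f (G.src e)) ^ 2)

end MetricGraph

/-! Testing the weak formulation against functions supported on one edge and vanishing at its
ends gives `‖u_e'‖₂² = (u(w) - u(v))² / ℓ_e` on a bounded edge `vw` (the value for the affine
interpolant) and `u_e' = 0` on a half-line: there, testing against `u_e - u_e(0) e^{-μx}` and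
Cauchy–Schwarz give `‖u_e'‖₂⁴ ≤ C μ` for every `μ > 0`. Testing against
the interpolation of the vertex indicator `𝟙_v` then yields the discrete equation (a), and summing
the edge values gives (b). For (c), testing against `u` itself gives
`‖u'‖₂² = ρ Σ_v |u(v)|^p`, so the energy is `(1/2 - 1/p) ρ Σ_v |u(v)|^p`; at a vertex where `|û|`
attains its maximum `M`, equation (a) gives `ρ M^{p-1} ≤ 4 (Σ_e 1/ℓ_e) M`, which bounds `M`
in terms of `p` and `G` alone once `ρ ≥ 1/2`. -/

open Real

theorem sq_integral_mul_le_integral_sq_mul_integral_sq {α : Type*} [MeasurableSpace α]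
    {μ : Measure α} {f g : α → ℝ} (hf : MemLp f 2 μ) (hg : MemLp g 2 μ) :
    (∫ x, f x * g x ∂μ) ^ 2 ≤ (∫ x, f x ^ 2 ∂μ) * ∫ x, g x ^ 2 ∂μ := by
  have hfg : Integrable (fun x => f x * g x) μ := hf.integrable_mul hg
  have hquad : ∀ t : ℝ, 0 ≤ (∫ x, f x ^ 2 ∂μ) * (t * t) + 2 * (∫ x, f x * g x ∂μ) * t +
      ∫ x, g x ^ 2 ∂μ := by
    intro t
    calc (0 : ℝ) ≤ ∫ x, (t * f x + g x) ^ 2 ∂μ := integral_nonneg fun _ => sq_nonneg _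
      _ = ∫ x, ((t * t) * f x ^ 2 + (2 * t) * (f x * g x) + g x ^ 2) ∂μ := by
          congr with x; ring
      _ = _ := by
          have hfst : Integrable (fun x => (t * t) * f x ^ 2 + (2 * t) * (f x * g x)) μ :=
            (hf.integrable_sq.const_mul _).add (hfg.const_mul _)
          rw [integral_add hfst hg.integrable_sq,
            integral_add (hf.integrable_sq.const_mul _) (hfg.const_mul _), integral_const_mul,
            integral_const_mul]
          ring
  have := discrim_le_zero hquad
  rw [discrim] at this
  linarith

structure HasH1DerivOn (f f' : ℝ → ℝ) (I : Set ℝ) : Prop where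
  continuousOn : ContinuousOn f I
  hasDerivAt : ∀ x ∈ interior I, HasDerivAt f (f' x) x
  memLp : MemLp f 2 (volume.restrict I)
  memLp_deriv : MemLp f' 2 (volume.restrict I)

namespace HasH1DerivOn

variable {f f' g g' : ℝ → ℝ} {I : Set ℝ}

theorem sub (hf : HasH1DerivOn f f' I) (hg : HasH1DerivOn g g' I) :
    HasH1DerivOn (fun x => f x - g x) (fun x => f' x - g' x) I where
  continuousOn := hf.continuousOn.sub hg.continuousOn
  hasDerivAt x hx := (hf.hasDerivAt x hx).sub (hg.hasDerivAt x hx)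
  memLp := hf.memLp.sub hg.memLp
  memLp_deriv := hf.memLp_deriv.sub hg.memLp_deriv

theorem integral_Icc_eq_sub {a b : ℝ} (hab : a ≤ b) (hf : HasH1DerivOn f f' (Icc a b)) :
    ∫ x in Icc a b, f' x = f b - f a := by
  rw [integral_Icc_eq_integral_Ioc, ← intervalIntegral.integral_of_le hab]
  refine intervalIntegral.integral_eq_sub_of_hasDeriv_right_of_le hab hf.continuousOn
    (fun x hx => (hf.hasDerivAt x (by rwa [interior_Icc])).hasDerivWithinAt) ?_
  exact (intervalIntegrable_iff_integrableOn_Icc_of_le hab).2 (hf.memLp_deriv.integrable one_le_two)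

end HasH1DerivOn

theorem Continuous.memLp_restrict_Icc {f : ℝ → ℝ} (hf : Continuous f) (p : ℝ≥0∞) (a b : ℝ) :
    MemLp f p (volume.restrict (Icc a b)) := by
  obtain ⟨C, hC⟩ := isCompact_Icc.exists_bound_of_continuousOn hf.continuousOn
  exact MemLp.of_bound hf.aestronglyMeasurable C
    ((ae_restrict_iff' measurableSet_Icc).2 (ae_of_all _ hC))

theorem hasH1DerivOn_affine_Icc (c d a b : ℝ) :
    HasH1DerivOn (fun x => c + d * x) (fun _ => d) (Icc a b) where
  continuousOn := by fun_prop
  hasDerivAt x _ := by simpa using ((hasDerivAt_id x).const_mul d).const_add c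
  memLp := (by fun_prop : Continuous fun x : ℝ => c + d * x).memLp_restrict_Icc 2 a b
  memLp_deriv := memLp_const d

theorem sq_mul_exp (c a x : ℝ) : (c * exp (a * x)) ^ 2 = c ^ 2 * exp (2 * a * x) := by
  rw [mul_pow, ← exp_nat_mul]; ring_nf

theorem integral_sq_mul_exp_Ici (c : ℝ) {a : ℝ} (ha : a < 0) :
    ∫ x in Ici 0, (c * exp (a * x)) ^ 2 = -(c ^ 2 / (2 * a)) := by
  simp_rw [sq_mul_exp]
  rw [integral_const_mul, integral_Ici_eq_integral_Ioi, integral_exp_mul_Ioi (by linarith) 0]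
  simp [neg_div]
  ring

theorem memLp_mul_exp_Ici (c : ℝ) {a : ℝ} (ha : a < 0) :
    MemLp (fun x => c * exp (a * x)) 2 (volume.restrict (Ici 0)) := by
  refine (memLp_two_iff_integrable_sq (by fun_prop)).2 ?_
  simp_rw [sq_mul_exp]
  exact ((integrableOn_Ici_iff_integrableOn_Ioi (by simp)).2
    (integrableOn_exp_mul_Ioi (by linarith) 0)).const_mul _

theorem hasH1DerivOn_mul_exp_Ici (c : ℝ) {a : ℝ} (ha : a < 0) :
    HasH1DerivOn (fun x => c * exp (a * x)) (fun x => c * a * exp (a * x)) (Ici 0) where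
  continuousOn := by fun_prop
  hasDerivAt x _ := by
    simpa [mul_comm, mul_left_comm, mul_assoc] using
      (((hasDerivAt_id x).const_mul a).exp.const_mul c)
  memLp := memLp_mul_exp_Ici c ha
  memLp_deriv := memLp_mul_exp_Ici (c * a) ha

namespace MetricGraph

variable {G : MetricGraph} {e : G.E} {w : G.V} {u : G.Fun} {p ρ : ℝ}

theorem interval_of_ne_top (h : G.length e ≠ ⊤) :
    G.interval e = Icc 0 (G.length e).toReal := if_neg h

theorem interval_of_eq_top (h : G.length e = ⊤) : G.interval e = Ici 0 := if_pos h

theorem toReal_length_pos (h : G.length e ≠ ⊤) : 0 < (G.length e).toReal :=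
  ENNReal.toReal_pos (G.length_pos e).ne' h

theorem length_ne_top_of_dst_eq_some (hw : G.dst e = some w) : G.length e ≠ ⊤ := by
  rw [ne_eq, ← G.dst_none_iff, hw]
  exact Option.some_ne_none w

theorem length_eq_top_of_dst_eq_none (h : G.dst e = none) : G.length e = ⊤ :=
  (G.dst_none_iff e).1 h

theorem IsH1.hasH1DerivOn (hu : G.IsH1 u) (e : G.E) :
    HasH1DerivOn (G.eFun u e) (G.eDeriv u e) (G.interval e) :=
  ⟨hu.1 e, hu.2.1 e, hu.2.2.1 e, hu.2.2.2.1 e⟩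

theorem IsH1.eFun_zero (hu : G.IsH1 u) (e : G.E) : G.eFun u e 0 = G.vVal u (G.src e) :=
  hu.2.2.2.2.1 e

theorem IsH1.eFun_length (hu : G.IsH1 u) (hw : G.dst e = some w) :
    G.eFun u e (G.length e).toReal = G.vVal u w :=
  hu.2.2.2.2.2 e w hw

theorem IsH1.integral_eDeriv (hu : G.IsH1 u) (hw : G.dst e = some w) :
    ∫ x in G.interval e, G.eDeriv u e x = G.vVal u w - G.vVal u (G.src e) := by
  have hne := length_ne_top_of_dst_eq_some hw
  have hI := hu.hasH1DerivOn e
  rw [interval_of_ne_top hne] at hI ⊢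
  rw [hI.integral_Icc_eq_sub (toReal_length_pos hne).le, hu.eFun_length hw, hu.eFun_zero]

noncomputable def single (G : MetricGraph) [DecidableEq G.E] (e₀ : G.E) (f f' : ℝ → ℝ) : G.Fun :=
  (Pi.single e₀ f, Pi.single e₀ f', 0)

theorem isH1_single [DecidableEq G.E] {f f' : ℝ → ℝ} (hf : HasH1DerivOn f f' (G.interval e))
    (h₀ : f 0 = 0) (hℓ : f (G.length e).toReal = 0) : G.IsH1 (G.single e f f') := by
  refine ⟨fun e' => ?_, fun e' => ?_, fun e' => ?_, fun e' => ?_, fun e' => ?_,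
    fun e' v _ => ?_⟩ <;>
  · rcases eq_or_ne e' e with rfl | he
    · simp_all [single, eFun, eDeriv, vVal, hf.continuousOn, hf.hasDerivAt, hf.memLp,
        hf.memLp_deriv]
    · simp [single, eFun, eDeriv, vVal, he, Pi.zero_def, continuousOn_const, hasDerivAt_const]

theorem IsWeakSolution.integral_eDeriv_mul_eq_zero (hsol : G.IsWeakSolution p ρ 0 u)
    {f f' : ℝ → ℝ} (hf : HasH1DerivOn f f' (G.interval e)) (h₀ : f 0 = 0)
    (hℓ : f (G.length e).toReal = 0) :
    ∫ x in G.interval e, G.eDeriv u e x * f' x = 0 := by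
  classical
  have h := hsol _ (isH1_single hf h₀ hℓ)
  simp only [vertexTerm, single, vVal, Pi.zero_apply, mul_zero, Finset.sum_const_zero,
    zero_mul, add_zero] at h
  rw [← h, dinner, Finset.sum_eq_single e (fun b _ hb => by simp [eDeriv, hb]) (by simp)]
  simp [eDeriv]

theorem IsWeakSolution.integral_eDeriv_sq_of_dst_eq_some (hsol : G.IsWeakSolution p ρ 0 u)
    (hu : G.IsH1 u) (hw : G.dst e = some w) :
    ∫ x in G.interval e, G.eDeriv u e x ^ 2
      = ((G.length e).toReal)⁻¹ * (G.vVal u w - G.vVal u (G.src e)) ^ 2 := by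
  have hne := length_ne_top_of_dst_eq_some hw
  set c := (G.vVal u w - G.vVal u (G.src e)) / (G.length e).toReal
  have hI := hu.hasH1DerivOn e
  -- `u_e` minus its affine interpolation vanishes at both ends
  have htest := hsol.integral_eDeriv_mul_eq_zero
    (hI.sub (interval_of_ne_top hne ▸ hasH1DerivOn_affine_Icc (G.eFun u e 0) c 0 _))
    (by simp) (by simp [hu.eFun_length hw, hu.eFun_zero, c, (toReal_length_pos hne).ne'])
  have hftc := hu.integral_eDeriv hw
  rw [interval_of_ne_top hne] at hI htest hftc ⊢
  have hsq : ∫ x in Icc 0 (G.length e).toReal, G.eDeriv u e x ^ 2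
      = ∫ x in Icc 0 (G.length e).toReal, G.eDeriv u e x * c := by
    rw [← sub_eq_zero, ← integral_sub hI.memLp_deriv.integrable_sq
      ((hI.memLp_deriv.integrable one_le_two).mul_const c)]
    simpa only [sq, mul_sub] using htest
  rw [hsq, integral_mul_const, hftc]
  ring

theorem IsWeakSolution.integral_eDeriv_sq_of_length_eq_top (hsol : G.IsWeakSolution p ρ 0 u)
    (hu : G.IsH1 u) (htop : G.length e = ⊤) :
    ∫ x in G.interval e, G.eDeriv u e x ^ 2 = 0 := by
  have hI := hu.hasH1DerivOn e
  set A := ∫ x in G.interval e, G.eDeriv u e x ^ 2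
  set u₀ := G.eFun u e 0
  -- test against `u_e - u₀ e^{-μx}`; Cauchy–Schwarz bounds the cross term by `(A μ / 2)^{1/2}`
  have hbound : ∀ μ > 0, A ^ 2 ≤ u₀ ^ 2 * A / 2 * μ := by
    intro μ hμ
    have hexp := hasH1DerivOn_mul_exp_Ici u₀ (neg_neg_of_pos hμ)
    have hg := (hasH1DerivOn_mul_exp_Ici μ (neg_neg_of_pos hμ)).memLp
    rw [← interval_of_eq_top htop] at hexp hg
    have htest := hsol.integral_eDeriv_mul_eq_zero (hI.sub hexp) (by simp [u₀])
      (by simp [htop, u₀])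
    have hcross : Integrable (fun x => G.eDeriv u e x * (μ * exp (-μ * x)))
        (volume.restrict (G.interval e)) := hI.memLp_deriv.integrable_mul hg
    have hsplit : A + u₀ * ∫ x in G.interval e, G.eDeriv u e x * (μ * exp (-μ * x)) = 0 := by
      rw [← htest, ← integral_const_mul, ← integral_add hI.memLp_deriv.integrable_sq
        (hcross.const_mul u₀)]
      congr with x
      ring
    have hcs := sq_integral_mul_le_integral_sq_mul_integral_sq hI.memLp_deriv hg
    rw [interval_of_eq_top htop, integral_sq_mul_exp_Ici μ (neg_neg_of_pos hμ),
      ← interval_of_eq_top htop] at hcs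
    calc A ^ 2 = u₀ ^ 2 * (∫ x in G.interval e, G.eDeriv u e x * (μ * exp (-μ * x))) ^ 2 := by
          rw [eq_neg_of_add_eq_zero_left hsplit]; ring
      _ ≤ u₀ ^ 2 * (A * -(μ ^ 2 / (2 * -μ))) := by gcongr
      _ = u₀ ^ 2 * A / 2 * μ := by field_simp
  have hlim : Tendsto (fun μ => u₀ ^ 2 * A / 2 * μ) (𝓝[>] 0) (𝓝 0) := by
    have h := (continuous_const_mul (u₀ ^ 2 * A / 2)).tendsto 0
    rw [mul_zero] at h
    exact tendsto_nhdsWithin_of_tendsto_nhds h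
  have hA : A ^ 2 ≤ 0 := ge_of_tendsto hlim (eventually_nhdsWithin_of_forall hbound)
  exact pow_eq_zero_iff two_ne_zero |>.1 (le_antisymm hA (sq_nonneg A))

theorem IsWeakSolution.integral_eDeriv_mul_of_length_eq_top (hsol : G.IsWeakSolution p ρ 0 u)
    (hu : G.IsH1 u) (htop : G.length e = ⊤) {g : ℝ → ℝ}
    (hg : MemLp g 2 (volume.restrict (G.interval e))) :
    ∫ x in G.interval e, G.eDeriv u e x * g x = 0 := by
  have hcs := sq_integral_mul_le_integral_sq_mul_integral_sq (hu.hasH1DerivOn e).memLp_deriv hg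
  rw [hsol.integral_eDeriv_sq_of_length_eq_top hu htop, zero_mul] at hcs
  exact pow_eq_zero_iff two_ne_zero |>.1 (le_antisymm hcs (sq_nonneg _))

noncomputable def interpolate (G : MetricGraph) (g : G.V → ℝ) : G.Fun :=
  (fun e x => (G.dst e).elim (g (G.src e) * exp (-x))
      fun w => g (G.src e) + (g w - g (G.src e)) / (G.length e).toReal * x,
   fun e x => (G.dst e).elim (-(g (G.src e) * exp (-x)))
      fun w => (g w - g (G.src e)) / (G.length e).toReal,
   g)

theorem isH1_interpolate (g : G.V → ℝ) : G.IsH1 (G.interpolate g) := by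
  have hI : ∀ e, HasH1DerivOn (G.eFun (G.interpolate g) e) (G.eDeriv (G.interpolate g) e)
      (G.interval e) := by
    intro e
    rcases hd : G.dst e with _ | w
    · rw [interval_of_eq_top (length_eq_top_of_dst_eq_none hd)]
      simpa [eFun, eDeriv, interpolate, hd] using
        hasH1DerivOn_mul_exp_Ici (g (G.src e)) neg_one_lt_zero
    · rw [interval_of_ne_top (length_ne_top_of_dst_eq_some hd)]
      simpa [eFun, eDeriv, interpolate, hd] using hasH1DerivOn_affine_Icc (g (G.src e)) _ 0 _
  refine ⟨fun e => (hI e).continuousOn, fun e => (hI e).hasDerivAt, fun e => (hI e).memLp,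
    fun e => (hI e).memLp_deriv, fun e => ?_, fun e w hw => ?_⟩
  · rcases hd : G.dst e with _ | w <;> simp [eFun, vVal, interpolate, hd]
  · simp [eFun, vVal, interpolate, hw, (toReal_length_pos (length_ne_top_of_dst_eq_some hw)).ne']

noncomputable def dirichletForm (G : MetricGraph) (f g : G.V → ℝ) : ℝ :=
  ∑ e, (G.dst e).elim 0
    fun w => ((G.length e).toReal)⁻¹ * (f w - f (G.src e)) * (g w - g (G.src e))

theorem dirichletForm_pi_single (f : G.V → ℝ) (v : G.V) :
    G.dirichletForm f (Pi.single v 1) = -G.discLap f v := by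
  rw [dirichletForm, discLap, ← Finset.sum_neg_distrib]
  refine Finset.sum_congr rfl fun e _ => ?_
  rcases hd : G.dst e with _ | w
  · simp
  · by_cases hs : G.src e = v <;> by_cases hw : w = v <;> simp [hs, hw, Pi.single_apply]
    ring

theorem IsWeakSolution.dinner_interpolate (hsol : G.IsWeakSolution p ρ 0 u) (hu : G.IsH1 u)
    (g : G.V → ℝ) : G.dinner u (G.interpolate g) = G.dirichletForm (G.vVal u) g := by
  refine Finset.sum_congr rfl fun e _ => ?_
  rcases hd : G.dst e with _ | w
  · simpa [hd] using hsol.integral_eDeriv_mul_of_length_eq_top hu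
      (length_eq_top_of_dst_eq_none hd) ((isH1_interpolate g).hasH1DerivOn e).memLp_deriv
  · simp only [eDeriv, interpolate, hd, Option.elim_some]
    rw [integral_mul_const, ← eDeriv, hu.integral_eDeriv hd]
    ring

theorem IsWeakSolution.neg_discLap_eq (hsol : G.IsWeakSolution p ρ 0 u) (hu : G.IsH1 u)
    (v : G.V) : -G.discLap (G.vVal u) v = ρ * |G.vVal u v| ^ (p - 2) * G.vVal u v := by
  have h := hsol _ (isH1_interpolate (Pi.single v 1))
  rw [zero_mul, add_zero, hsol.dinner_interpolate hu, dirichletForm_pi_single] at h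
  rw [h, vertexTerm]
  simp [vVal, interpolate, Pi.single_apply, mul_assoc]

theorem IsWeakSolution.dsq_eq_combSemiNormSq (hsol : G.IsWeakSolution p ρ 0 u) (hu : G.IsH1 u) :
    G.dsq u = G.combSemiNormSq (G.vVal u) := by
  refine Finset.sum_congr rfl fun e _ => ?_
  rcases hd : G.dst e with _ | w
  · simpa [hd] using hsol.integral_eDeriv_sq_of_length_eq_top hu (length_eq_top_of_dst_eq_none hd)
  · simpa [hd] using hsol.integral_eDeriv_sq_of_dst_eq_some hu hd

/-- Half-lines contribute `(⊤).toReal⁻¹ = 0`. -/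
noncomputable def conductance (G : MetricGraph) : ℝ := ∑ e, ((G.length e).toReal)⁻¹

theorem conductance_nonneg : 0 ≤ G.conductance :=
  Finset.sum_nonneg fun _ _ => inv_nonneg.2 ENNReal.toReal_nonneg

theorem abs_discLap_le {f : G.V → ℝ} {M : ℝ} (hM : ∀ w, |f w| ≤ M) (v : G.V) :
    |G.discLap f v| ≤ 4 * G.conductance * M := by
  have hM0 : 0 ≤ M := (abs_nonneg _).trans (hM v)
  have hdiff : ∀ (c : ℝ) (a b : G.V), 0 ≤ c → |c * (f a - f b)| ≤ c * (2 * M) := by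
    intro c a b hc
    rw [abs_mul, abs_of_nonneg hc]
    gcongr
    linarith [abs_sub (f a) (f b), hM a, hM b]
  have hedge : ∀ e, |(if G.src e = v then
        (G.dst e).elim 0 (fun w => ((G.length e).toReal)⁻¹ * (f w - f v)) else 0) +
      (if G.dst e = some v then ((G.length e).toReal)⁻¹ * (f (G.src e) - f v) else 0)|
      ≤ ((G.length e).toReal)⁻¹ * (4 * M) := by
    intro e
    have hc : 0 ≤ ((G.length e).toReal)⁻¹ := inv_nonneg.2 ENNReal.toReal_nonneg
    refine (abs_add_le _ _).trans ?_
    have h1 : |(if G.src e = v then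
        (G.dst e).elim 0 (fun w => ((G.length e).toReal)⁻¹ * (f w - f v)) else 0)|
        ≤ ((G.length e).toReal)⁻¹ * (2 * M) := by
      split_ifs
      · rcases G.dst e with _ | w
        · simpa using by positivity
        · exact hdiff _ _ _ hc
      · simpa using by positivity
    have h2 : |(if G.dst e = some v then ((G.length e).toReal)⁻¹ * (f (G.src e) - f v) else 0)|
        ≤ ((G.length e).toReal)⁻¹ * (2 * M) := by
      split_ifs
      · exact hdiff _ _ _ hc
      · simpa using by positivity
    linarith
  calc |G.discLap f v| ≤ ∑ e, ((G.length e).toReal)⁻¹ * (4 * M) :=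
        (Finset.abs_sum_le_sum_abs _ _).trans (Finset.sum_le_sum fun e _ => hedge e)
    _ = 4 * G.conductance * M := by rw [← Finset.sum_mul, conductance]; ring

theorem abs_le_of_neg_discLap_eq {f : G.V → ℝ} (hp : 2 < p) (hρ : 1 / 2 ≤ ρ)
    (hf : ∀ v, -G.discLap f v = ρ * |f v| ^ (p - 2) * f v) (v : G.V) :
    |f v| ≤ (8 * G.conductance) ^ (p - 2)⁻¹ := by
  obtain ⟨v₀, -, hmax⟩ :=
    Finset.exists_max_image Finset.univ (fun w => |f w|) ⟨v, Finset.mem_univ v⟩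
  have hM : ∀ w, |f w| ≤ |f v₀| := fun w => hmax w (Finset.mem_univ w)
  refine (hM v).trans ?_
  have hC := G.conductance_nonneg
  rcases (abs_nonneg (f v₀)).eq_or_lt with h0 | hpos
  · rw [← h0]
    exact rpow_nonneg (by positivity) _
  have hlap : ρ * |f v₀| ^ (p - 2) * |f v₀| ≤ 4 * G.conductance * |f v₀| := by
    have h := abs_discLap_le hM v₀
    rwa [← abs_neg, hf, abs_mul, abs_mul, abs_of_nonneg (by linarith),
      abs_of_nonneg (by positivity)] at h
  have hpow : |f v₀| ^ (p - 2) ≤ 8 * G.conductance := by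
    have := le_of_mul_le_mul_right hlap hpos
    nlinarith [rpow_nonneg (abs_nonneg (f v₀)) (p - 2)]
  exact (le_rpow_inv_iff_of_pos (abs_nonneg _) (by positivity) (by linarith)).2 hpow

theorem vertexTerm_self (hp : p ≠ 0) : G.vertexTerm p u u = G.vertexLp p u := by
  refine Finset.sum_congr rfl fun v _ => ?_
  have h := rpow_add_natCast' (abs_nonneg (G.vVal u v)) (y := p - 2) (n := 2) (by simpa using hp)
  rw [mul_assoc, ← abs_mul_abs_self, ← sq, ← h, Nat.cast_ofNat, sub_add_cancel]

theorem dinner_self : G.dinner u u = G.dsq u := by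
  simp only [dinner, dsq, sq]

theorem IsWeakSolution.dsq_eq_mul_vertexLp (hsol : G.IsWeakSolution p ρ 0 u) (hu : G.IsH1 u)
    (hp : p ≠ 0) : G.dsq u = ρ * G.vertexLp p u := by
  have h := hsol u hu
  rwa [zero_mul, add_zero, vertexTerm_self hp, dinner_self] at h

end MetricGraph

theorem zero_lambda_solutions_bounded_energy_general (G : MetricGraph)
    (p : ℝ) (hp : 2 < p) (ρ : ℝ)
    (u : G.Fun) (hu : G.IsH1 u) (hsol : G.IsWeakSolution p ρ 0 u) :
    (∀ v, -G.discLap (G.vVal u) v = ρ * |G.vVal u v| ^ (p - 2) * G.vVal u v) ∧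
    (G.dsq u = G.combSemiNormSq (G.vVal u)) ∧
    (∃ Spg > (0:ℝ), ∀ ρ' ∈ Set.Icc (1 / 2 : ℝ) 1, ∀ u' : G.Fun, G.IsH1 u' →
      G.IsWeakSolution p ρ' 0 u' → G.energy p ρ' u' ≤ Spg) := by
  refine ⟨hsol.neg_discLap_eq hu, hsol.dsq_eq_combSemiNormSq hu, ?_⟩
  set B := (8 * G.conductance) ^ (p - 2)⁻¹
  have hB : 0 ≤ B := rpow_nonneg (by linarith [G.conductance_nonneg]) _
  refine ⟨Fintype.card G.V * B ^ p / 2 + 1, by positivity, fun ρ' hρ' u' hu' hsol' => ?_⟩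
  have hLp : G.vertexLp p u' ≤ Fintype.card G.V * B ^ p := by
    have hbound := MetricGraph.abs_le_of_neg_discLap_eq hp hρ'.1 (hsol'.neg_discLap_eq hu')
    calc G.vertexLp p u' ≤ ∑ _v : G.V, B ^ p :=
          Finset.sum_le_sum fun v _ => rpow_le_rpow (abs_nonneg _) (hbound v) (by linarith)
      _ = _ := by simp
  have hLp0 : 0 ≤ G.vertexLp p u' := Finset.sum_nonneg fun _ _ => by positivity
  -- on solutions, `E_ρ(u) = (1/2 - 1/p) ρ Σ_v |u(v)|^p`
  rw [MetricGraph.energy, hsol'.dsq_eq_mul_vertexLp hu' (by linarith)]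
  have hρp : 0 ≤ ρ' / p * G.vertexLp p u' := by
    have := hρ'.1; positivity
  nlinarith [hρ'.2]

/-- If `G` has non-empty compact core, `p > 2`, `ρ ∈ [1/2,1]`, and
`u ∈ H¹(G)` weakly solves `u'' = 0` on edges with vertex conditions
`Σ_{e≻v} u_e'(v) = −ρ|u(v)|^{p−2}u(v)`, then: (a) the vertex restriction `û = u|_V`
solves `−Δ_d û = ρ|û|^{p−2}û` on `V`; (b) `‖u'‖₂² = [û]²_{H¹(V)}`; and (c) there is
`S_{p,G} > 0` depending only on `p` and `G` such that every such solution (for any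
`ρ' ∈ [1/2,1]`) has energy at most `S_{p,G}`. -/
theorem zero_lambda_solutions_bounded_energy (G : MetricGraph) (hconn : G.Connected)
    (hnc : G.Noncompact) (hcore : ∃ e, G.length e ≠ ⊤)
    (p : ℝ) (hp : 2 < p) (ρ : ℝ) (hρ : ρ ∈ Set.Icc (1 / 2 : ℝ) 1)
    (u : G.Fun) (hu : G.IsH1 u) (hsol : G.IsWeakSolution p ρ 0 u) :
    (∀ v, -G.discLap (G.vVal u) v = ρ * |G.vVal u v| ^ (p - 2) * G.vVal u v) ∧
    (G.dsq u = G.combSemiNormSq (G.vVal u)) ∧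
    (∃ Spg > (0:ℝ), ∀ ρ' ∈ Set.Icc (1 / 2 : ℝ) 1, ∀ u' : G.Fun, G.IsH1 u' →
      G.IsWeakSolution p ρ' 0 u' → G.energy p ρ' u' ≤ Spg) :=
  zero_lambda_solutions_bounded_energy_general G p hp ρ u hu hsol
end
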